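/- arXiv:1706.00337 — 6 statements merged into one kernel-verified Lean document; each statement's English description precedes it below -/
import Mathlib

section
/- Define g(t,2)=1 and g(0,k)=1 for all integers t≥0, k≥2, and g(t,k)=⌈(t+1)/2⌉+g(⌊(t-1)/2⌋,k-1) for t≥1, k≥3. Then g(t,k) > (1 - 1/2^{k-2})·t for all integers t≥0 and k≥2. -/
/-- with `g` as in the recursive definition,
`g t k > (1 - 1/2^(k-2)) * t` for all `t ≥ 0`, `k ≥ 2`. -/
theorem g_lower_bound (g : ℕ → ℕ → ℕ)
    (h2 : ∀ t : ℕ, g t 2 = 1)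
    (h0 : ∀ k : ℕ, 2 ≤ k → g 0 k = 1)
    (hrec : ∀ t k : ℕ, 1 ≤ t → 3 ≤ k →
      g t k = (⌈((t : ℚ) + 1) / 2⌉).toNat + g (⌊((t : ℚ) - 1) / 2⌋).toNat (k - 1)) :
    ∀ t k : ℕ, 2 ≤ k → (g t k : ℚ) > (1 - 1 / 2 ^ (k - 2)) * t := by
  have main : ∀ k : ℕ, 2 ≤ k → ∀ t : ℕ, (g t k : ℚ) > (1 - 1 / 2 ^ (k - 2)) * t := by
    intro k hk
    induction k, hk using Nat.le_induction with
    | base =>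
      intro t
      simp [h2]
    | succ k hk ih =>
      intro t
      rcases Nat.eq_zero_or_pos t with rfl | ht
      · rw [h0 (k + 1) (by omega)]
        simp
      · rw [hrec t (k + 1) ht (by omega)]
        simp only [Nat.add_sub_cancel]
        have hy0 : (0:ℚ) < 1 / 2 ^ (k - 2) := by positivity
        have hk2 : (1:ℚ) / 2 ^ (k + 1 - 2) = (1 / 2 ^ (k - 2)) / 2 := by
          have h : k + 1 - 2 = (k - 2) + 1 := by omega
          rw [h, pow_succ]; ring
        rw [hk2]
        set y : ℚ := 1 / 2 ^ (k - 2) with hy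
        rcases Nat.even_or_odd t with ⟨m, rfl⟩ | ⟨m, rfl⟩
        · -- t = m + m, m ≥ 1
          have hm : 1 ≤ m := by omega
          have hc : (⌈(((m + m : ℕ) : ℚ) + 1) / 2⌉).toNat = m + 1 := by
            have h1 : (((m + m : ℕ) : ℚ) + 1) / 2 = 1 / 2 + (m : ℤ) := by
              push_cast; ring
            rw [h1, Int.ceil_add_intCast, show ⌈(1/2:ℚ)⌉ = 1 by rw [Int.ceil_eq_iff] <;> norm_num]
            omega
          have hf : (⌊(((m + m : ℕ) : ℚ) - 1) / 2⌋).toNat = m - 1 := by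
            have h1 : (((m + m : ℕ) : ℚ) - 1) / 2 = -(1 / 2) + (m : ℤ) := by
              push_cast; ring
            rw [h1, Int.floor_add_intCast, show ⌊(-(1/2):ℚ)⌋ = -1 by rw [Int.floor_eq_iff] <;> norm_num]
            omega
          rw [hc, hf]
          have hih := ih (m - 1)
          have hcast : ((m - 1 : ℕ) : ℚ) = (m : ℚ) - 1 := by
            push_cast [hm]; ring
          rw [hcast] at hih
          have hm' : (1:ℚ) ≤ (m : ℚ) := by exact_mod_cast hm
          push_cast
          nlinarith [mul_nonneg hy0.le (le_trans zero_le_one hm')]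
        · -- t = 2m + 1
          have hc : (⌈(((2 * m + 1 : ℕ) : ℚ) + 1) / 2⌉).toNat = m + 1 := by
            have h1 : (((2 * m + 1 : ℕ) : ℚ) + 1) / 2 = ((m : ℤ) + 1 : ℤ) := by
              push_cast; ring
            rw [h1, Int.ceil_intCast]
            omega
          have hf : (⌊(((2 * m + 1 : ℕ) : ℚ) - 1) / 2⌋).toNat = m := by
            have h1 : (((2 * m + 1 : ℕ) : ℚ) - 1) / 2 = ((m : ℤ) : ℚ) := by
              push_cast; ring
            rw [h1, Int.floor_intCast]
            omega
          rw [hc, hf]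
          have hih := ih m
          have hm0 : (0:ℚ) ≤ (m : ℚ) := by positivity
          push_cast
          nlinarith [mul_nonneg hy0.le hm0]
  intro t k hk
  exact main k hk t
end

section
/- Let c' be a positive integer, F a finite simple graph, and φ : V(F) → Fin c' a (not necessarily proper) coloring. Suppose φ is F-valid, i.e., there is no independent set of F on which φ attains all c' colors. Then the number of (F,φ)-forbidden colors — colors a for which some independent set of F attains exactly all colors other than a — is at most max(|V(F)| - c' + 2, 0). -/
/-- A set of vertices is independent: no edges inside it. -/
def IsIndepSet {V : Type*} (F : SimpleGraph V) (A : Set V) : Prop :=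
  ∀ ⦃u⦄, u ∈ A → ∀ ⦃v⦄, v ∈ A → ¬ F.Adj u v

universe u v

/-- The set of forbidden colors. -/
def Forb {V : Type u} {C : Type v} (F : SimpleGraph V) (φ : V → C) : Set C :=
  {c | ∃ A : Set V, IsIndepSet F A ∧ φ '' A = {c}ᶜ}

lemma forb_vertex {V : Type u} {C : Type v} {F : SimpleGraph V} {φ : V → C} {a b : C}
    (ha : a ∈ Forb F φ) (hba : b ≠ a) : ∃ x : V, φ x = b := by
  obtain ⟨A, -, hA⟩ := ha
  have hb : b ∈ φ '' A := by rw [hA]; exact hba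
  obtain ⟨x, -, hx⟩ := hb
  exact ⟨x, hx⟩

lemma exists_ne_of_one_lt_card {α : Type*} [Finite α] (h : 1 < Nat.card α) :
    ∃ a b : α, a ≠ b := by
  by_contra hc
  push_neg at hc
  have hs : Subsingleton α := ⟨fun a b => hc a b⟩
  rcases isEmpty_or_nonempty α with he | hn
  · simp [Nat.card_of_isEmpty] at h
  · obtain ⟨a⟩ := hn
    have := Nat.card_of_subsingleton a
    omega

lemma aux : ∀ (n : ℕ) {V : Type u} {C : Type v} (iV : Finite V) (iC : Finite C)
    (F : SimpleGraph V) (φ : V → C), Nat.card V ≤ n →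
    (¬ ∃ A : Set V, IsIndepSet F A ∧ φ '' A = Set.univ) →
    (∃ a ∈ Forb F φ, ∃ b ∈ Forb F φ, a ≠ b) →
    Nat.card C + (Forb F φ).ncard ≤ Nat.card V + 2 := by
  intro n
  induction n with
  | zero =>
    intro V C iV iC F φ hn hvalid hpair
    obtain ⟨a, ha, b, hb, hab⟩ := hpair
    obtain ⟨x, -⟩ := forb_vertex hb hab
    haveI := iV
    haveI : Nonempty V := ⟨x⟩
    have : 0 < Nat.card V := Nat.card_pos
    omega
  | succ n ih =>
    intro V C iV iC F φ hn hvalid hpair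
    haveI := iV; haveI := iC
    classical
    obtain ⟨a₀, ha₀, b₀, hb₀, hne₀⟩ := hpair
    have hTle : (Forb F φ).ncard ≤ Nat.card C := by
      simpa [Set.ncard_univ] using
        Set.ncard_le_ncard (Set.subset_univ (Forb F φ)) Set.finite_univ
    by_cases hC2 : Nat.card C ≤ 2
    · -- few colors: direct
      obtain ⟨x, hx⟩ := forb_vertex ha₀ hne₀.symm
      obtain ⟨y, hy⟩ := forb_vertex hb₀ hne₀
      have hxy : x ≠ y := fun h => hne₀ (by rw [← hy, ← hx, h])
      have h2 : 2 ≤ Nat.card V := by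
        have := Set.ncard_le_ncard (Set.subset_univ ({x, y} : Set V)) Set.finite_univ
        rwa [Set.ncard_univ, Set.ncard_pair hxy] at this
      omega
    push_neg at hC2
    by_cases hAll : ∀ c : C, c ∈ Forb F φ
    · -- Case B : all colors forbidden
      have hTcard : (Forb F φ).ncard = Nat.card C := by
        rw [Set.eq_univ_of_forall hAll, Set.ncard_univ]
      by_cases huniq : ∃ a : C, ∀ vv ww : V, φ vv = a → φ ww = a → vv = ww
      · -- B2 : some color with (at most) one vertex
        obtain ⟨a, hu⟩ := huniq
        obtain ⟨b, hba⟩ : ∃ b : C, b ≠ a := by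
          obtain ⟨c1, c2, hc⟩ := exists_ne_of_one_lt_card (α := C) (by omega)
          by_cases h : c1 = a
          · exact ⟨c2, fun hh => hc (by rw [h, hh])⟩
          · exact ⟨c1, h⟩
        obtain ⟨x, hxa⟩ := forb_vertex (hAll b) (Ne.symm hba)
        obtain ⟨Aa, hIa, hImA⟩ := hAll a
        have hxAa : x ∉ Aa := fun h => by
          have : φ x ∈ ({a}ᶜ : Set C) := hImA ▸ Set.mem_image_of_mem φ h
          exact this hxa
        have hyex : ∃ y ∈ Aa, F.Adj x y := by
          by_contra hno
          push_neg at hno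
          apply hvalid
          refine ⟨insert x Aa, ?_, ?_⟩
          · intro u hu' w hw' hadj
            rcases Set.mem_insert_iff.mp hu' with rfl | hu''
            · rcases Set.mem_insert_iff.mp hw' with rfl | hw''
              · exact F.irrefl hadj
              · exact hno w hw'' hadj
            · rcases Set.mem_insert_iff.mp hw' with rfl | hw''
              · exact hno u hu'' hadj.symm
              · exact hIa hu'' hw'' hadj
          · rw [Set.image_insert_eq, hImA, hxa]
            ext c
            by_cases h : c = a <;> simp [h]
        obtain ⟨y, hyA, hxy⟩ := hyex
        have hyx : y ≠ x := fun h => F.irrefl (h ▸ hxy)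
        set Vs : Set V := {w | w ≠ x ∧ ¬ F.Adj x w} with hVsdef
        set Cs : Set C := {c | c ≠ a} with hCsdef
        let F' : SimpleGraph Vs := F.comap (fun w => (w : V))
        have hφm : ∀ w : Vs, φ (w : V) ≠ a := fun w h => w.2.1 (hu _ _ h hxa)
        let φ' : Vs → Cs := fun w => ⟨φ (w : V), hφm w⟩
        have hvalid' : ¬ ∃ A : Set Vs, IsIndepSet F' A ∧ φ' '' A = Set.univ := by
          rintro ⟨A', hI, hIm⟩
          apply hvalid
          refine ⟨insert x (Subtype.val '' A'), ?_, ?_⟩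
          · intro p hp q hq hadj
            rcases Set.mem_insert_iff.mp hp with rfl | hp'
            · rcases Set.mem_insert_iff.mp hq with rfl | hq'
              · exact F.irrefl hadj
              · obtain ⟨q', hq'', rfl⟩ := hq'
                exact q'.2.2 hadj
            · rcases Set.mem_insert_iff.mp hq with rfl | hq'
              · obtain ⟨p', hp'', rfl⟩ := hp'
                exact p'.2.2 hadj.symm
              · obtain ⟨p', hp'', rfl⟩ := hp'
                obtain ⟨q', hq'', rfl⟩ := hq'
                exact hI hp'' hq'' hadj
          · ext c
            simp only [Set.mem_univ, iff_true, Set.image_insert_eq, Set.mem_insert_iff, hxa]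
            by_cases hc : c = a
            · left; exact hc
            · right
              have hm : (⟨c, hc⟩ : Cs) ∈ φ' '' A' := by rw [hIm]; trivial
              obtain ⟨w', hw', hww⟩ := hm
              exact ⟨(w' : V), ⟨w', hw', rfl⟩, congrArg Subtype.val hww⟩
        have hforb' : ∀ b' : Cs, b' ∈ Forb F' φ' := by
          rintro ⟨c, hc⟩
          obtain ⟨Ab, hIb, hImb⟩ := hAll c
          have hxAb : x ∈ Ab := by
            have : a ∈ φ '' Ab := by rw [hImb]; exact Ne.symm hc
            obtain ⟨w, hw, hwa⟩ := this
            rwa [hu w x hwa hxa] at hw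
          refine ⟨Subtype.val ⁻¹' Ab, ?_, ?_⟩
          · intro p hp q hq hadj
            exact hIb hp hq hadj
          · ext ⟨d, hd⟩
            simp only [Set.mem_image, Set.mem_compl_iff, Set.mem_singleton_iff,
              Set.mem_preimage]
            constructor
            · rintro ⟨w', hw', hwe⟩ heq
              have h1 : φ (w' : V) = d := congrArg Subtype.val hwe
              have h2 : d = c := congrArg Subtype.val heq
              have : φ (w' : V) ∈ ({c}ᶜ : Set C) := hImb ▸ Set.mem_image_of_mem φ hw'
              exact this (h1.trans h2)
            · intro hdc
              have hdc' : d ≠ c := fun h => hdc (Subtype.ext h)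
              have : d ∈ φ '' Ab := by rw [hImb]; exact hdc'
              obtain ⟨w, hw, hwd⟩ := this
              have hwx : w ≠ x := fun h => hd (by rw [← hwd, h, hxa])
              have hwadj : ¬ F.Adj x w := fun h => hIb hxAb hw h
              exact ⟨⟨w, hwx, hwadj⟩, hw, Subtype.ext hwd⟩
        have hsubVs : Vs ⊆ Set.univ \ {x, y} := by
          rintro w ⟨hwx, hwadj⟩
          refine ⟨trivial, ?_⟩
          intro hmem
          rcases Set.mem_insert_iff.mp hmem with rfl | h
          · exact hwx rfl
          · rw [Set.mem_singleton_iff] at h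
            exact hwadj (h ▸ hxy)
        have hxyV : ({x, y} : Set V).ncard = 2 := Set.ncard_pair (Ne.symm hyx)
        have h2V : 2 ≤ Nat.card V := by
          have := Set.ncard_le_ncard (Set.subset_univ ({x, y} : Set V)) Set.finite_univ
          rwa [Set.ncard_univ, hxyV] at this
        have hVsle : Vs.ncard ≤ Nat.card V - 2 := by
          have hdiff : (Set.univ \ ({x, y} : Set V)).ncard = Nat.card V - 2 := by
            rw [Set.ncard_diff (Set.subset_univ _) (Set.toFinite _), Set.ncard_univ, hxyV]
          rw [← hdiff]
          exact Set.ncard_le_ncard hsubVs (Set.toFinite _)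
        have hcardC : Cs.ncard + 1 = Nat.card C := by
          have h2 := Set.ncard_add_ncard_compl ({a} : Set C) (Set.toFinite _) (Set.toFinite _)
          have hcc : ({a}ᶜ : Set C) = Cs := by ext c; simp [hCsdef]
          rw [hcc, Set.ncard_singleton] at h2
          omega
        have hCs2 : 1 < Nat.card Cs := by
          rw [Nat.card_coe_set_eq]; omega
        obtain ⟨c1', c2', hcc'⟩ := exists_ne_of_one_lt_card hCs2
        have hrec := ih Subtype.finite Subtype.finite F' φ'
          (by rw [Nat.card_coe_set_eq]; omega) hvalid'
          ⟨c1', hforb' c1', c2', hforb' c2', hcc'⟩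
        have hFu : (Forb F' φ').ncard = Nat.card Cs := by
          rw [Set.eq_univ_of_forall hforb', Set.ncard_univ]
        rw [hFu] at hrec
        simp only [Nat.card_coe_set_eq] at hrec
        omega
      · -- B1 : every color appears at least twice
        push_neg at huniq
        choose f g hf hg hfg using huniq
        have hinj : Function.Injective (fun p : C × Bool => cond p.2 (f p.1) (g p.1)) := by
          rintro ⟨c1, b1⟩ ⟨c2, b2⟩ heq
          simp only at heq
          have hc : c1 = c2 := by
            have h1 : φ (cond b1 (f c1) (g c1)) = c1 := by cases b1 <;> simp [hf, hg]
            have h2 : φ (cond b2 (f c2) (g c2)) = c2 := by cases b2 <;> simp [hf, hg]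
            rw [← h1, ← h2, heq]
          subst hc
          cases b1 <;> cases b2
          · rfl
          · exact absurd heq.symm (hfg c1)
          · exact absurd heq (hfg c1)
          · rfl
        have hcard2 : Nat.card (C × Bool) ≤ Nat.card V :=
          Nat.card_le_card_of_injective _ hinj
        rw [Nat.card_prod, Nat.card_eq_fintype_card (α := Bool), Fintype.card_bool] at hcard2
        omega
    · -- Case A : some color not forbidden
      push_neg at hAll
      obtain ⟨t, ht⟩ := hAll
      have hta : a₀ ≠ t := fun h => ht (h ▸ ha₀)
      set Vs : Set V := {w | φ w ≠ t} with hVsdef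
      set Cs : Set C := {c | c ≠ t} with hCsdef
      let F' : SimpleGraph Vs := F.comap (fun w => (w : V))
      let φ' : Vs → Cs := fun w => ⟨φ (w : V), w.2⟩
      have hvalid' : ¬ ∃ A : Set Vs, IsIndepSet F' A ∧ φ' '' A = Set.univ := by
        rintro ⟨A', hI, hIm⟩
        apply ht
        refine ⟨Subtype.val '' A', ?_, ?_⟩
        · rintro p ⟨p', hp', rfl⟩ q ⟨q', hq', rfl⟩ hadj
          exact hI hp' hq' hadj
        · ext c
          simp only [Set.mem_compl_iff, Set.mem_singleton_iff]
          constructor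
          · rintro ⟨w, ⟨w', hw', rfl⟩, rfl⟩
            exact w'.2
          · intro hc
            have hm : (⟨c, hc⟩ : Cs) ∈ φ' '' A' := by rw [hIm]; trivial
            obtain ⟨w', hw', hww⟩ := hm
            exact ⟨(w' : V), ⟨w', hw', rfl⟩, congrArg Subtype.val hww⟩
      have hforb' : ∀ s : C, ∀ hs : s ∈ Forb F φ,
          (⟨s, fun h => ht (h ▸ hs)⟩ : Cs) ∈ Forb F' φ' := by
        intro s hs
        obtain ⟨A, hI, hIm⟩ := hs
        refine ⟨Subtype.val ⁻¹' A, ?_, ?_⟩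
        · intro p hp q hq hadj
          exact hI hp hq hadj
        · ext ⟨c, hc⟩
          simp only [Set.mem_image, Set.mem_compl_iff, Set.mem_singleton_iff,
            Set.mem_preimage]
          constructor
          · rintro ⟨w', hw', hwe⟩ heq
            have h1 : φ (w' : V) = c := congrArg Subtype.val hwe
            have h2 : c = s := congrArg Subtype.val heq
            have : φ (w' : V) ∈ ({s}ᶜ : Set C) := hIm ▸ Set.mem_image_of_mem φ hw'
            exact this (h1.trans h2)
          · intro hcs
            have hcs' : c ≠ s := fun h => hcs (Subtype.ext h)
            have : c ∈ φ '' A := by rw [hIm]; exact hcs'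
            obtain ⟨w, hw, hwc⟩ := this
            have hwt : φ w ≠ t := by rw [hwc]; exact hc
            exact ⟨⟨w, hwt⟩, hw, Subtype.ext hwc⟩
      have hcardC : Cs.ncard + 1 = Nat.card C := by
        have h2 := Set.ncard_add_ncard_compl ({t} : Set C) (Set.toFinite _) (Set.toFinite _)
        have hcc : ({t}ᶜ : Set C) = Cs := by ext c; simp [hCsdef]
        rw [hcc, Set.ncard_singleton] at h2
        omega
      have hcardV : Vs.ncard < Nat.card V := by
        obtain ⟨w, hw⟩ := forb_vertex ha₀ (Ne.symm hta)
        have hss : Vs ⊂ Set.univ := by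
          rw [Set.ssubset_univ_iff]
          intro h
          have : w ∈ Vs := h ▸ Set.mem_univ w
          exact this hw
        have := Set.ncard_lt_ncard hss Set.finite_univ
        rwa [Set.ncard_univ] at this
      have hTle' : (Forb F φ).ncard ≤ (Forb F' φ').ncard := by
        have hsub : Forb F φ ⊆ Subtype.val '' (Forb F' φ') := by
          intro s hs
          exact ⟨⟨s, fun h => ht (h ▸ hs)⟩, hforb' s hs, rfl⟩
        calc (Forb F φ).ncard ≤ (Subtype.val '' (Forb F' φ')).ncard :=
              Set.ncard_le_ncard hsub (Set.toFinite _)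
          _ ≤ (Forb F' φ').ncard := Set.ncard_image_le (Set.toFinite _)
      have hrec := ih Subtype.finite Subtype.finite F' φ'
        (by rw [Nat.card_coe_set_eq]; omega) hvalid'
        ⟨_, hforb' a₀ ha₀, _, hforb' b₀ hb₀, by
          intro h
          exact hne₀ (congrArg Subtype.val h)⟩
      simp only [Nat.card_coe_set_eq] at hrec
      omega

/-- if `φ : V → Fin c'` is `F`-valid (no independent set attains all `c'`
colors), then at most `max (|V(F)| - c' + 2) 0` colors are `(F,φ)`-forbidden, where a
color `a` is forbidden if some independent set attains exactly all colors other than `a`. -/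
theorem num_forbidden_colors_le {V : Type*} [Fintype V] (F : SimpleGraph V)
    (c' : ℕ) (hc' : 0 < c') (φ : V → Fin c')
    (hvalid : ¬ ∃ A : Set V, IsIndepSet F A ∧ φ '' A = Set.univ) :
    ({a : Fin c' | ∃ A : Set V, IsIndepSet F A ∧ φ '' A = {a}ᶜ}.ncard : ℤ) ≤
      max ((Fintype.card V : ℤ) - c' + 2) 0 := by
  classical
  have hTforb : {a : Fin c' | ∃ A : Set V, IsIndepSet F A ∧ φ '' A = {a}ᶜ} = Forb F φ := rfl
  rw [hTforb]
  set T : Set (Fin c') := Forb F φ with hT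
  rcases Nat.lt_or_ge T.ncard 2 with hlt | hge
  · rcases Nat.lt_or_ge T.ncard 1 with h0 | h1
    · have hz : T.ncard = 0 := by omega
      rw [hz]
      simp
    · obtain ⟨a, ha⟩ := Set.nonempty_of_ncard_ne_zero (by omega : T.ncard ≠ 0)
      obtain ⟨A, hI, hIm⟩ := ha
      have hcompl : ({a}ᶜ : Set (Fin c')).ncard + 1 = c' := by
        have h2 := Set.ncard_add_ncard_compl ({a} : Set (Fin c')) (Set.toFinite _)
          (Set.toFinite _)
        rw [Set.ncard_singleton, Nat.card_eq_fintype_card, Fintype.card_fin] at h2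
        omega
      have him : ({a}ᶜ : Set (Fin c')).ncard ≤ Fintype.card V := by
        rw [← hIm]
        calc (φ '' A).ncard ≤ A.ncard := Set.ncard_image_le (Set.toFinite _)
          _ ≤ Fintype.card V := by
            have := Set.ncard_le_ncard (Set.subset_univ A) Set.finite_univ
            rwa [Set.ncard_univ, Nat.card_eq_fintype_card] at this
      refine le_max_of_le_left ?_
      have h1 : (T.ncard : ℤ) ≤ 1 := by exact_mod_cast Nat.lt_succ_iff.mp hlt
      have h3 : c' ≤ Fintype.card V + 1 := by omega
      have h2 : (c' : ℤ) ≤ (Fintype.card V : ℤ) + 1 := by exact_mod_cast h3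
      omega
  · obtain ⟨a, ha, b, hb, hab⟩ := (Set.one_lt_ncard (Set.toFinite _)).mp hge
    have hrec := aux (Nat.card V) inferInstance inferInstance F φ le_rfl hvalid
      ⟨a, ha, b, hb, hab⟩
    simp only [Nat.card_eq_fintype_card, Fintype.card_fin] at hrec
    refine le_max_of_le_left ?_
    have h1 : ((c' + T.ncard : ℕ) : ℤ) ≤ ((Fintype.card V + 2 : ℕ) : ℤ) := by exact_mod_cast hrec
    push_cast at h1
    omega
end

section
/- Every triangle-free graph of tree-width at most t (t a positive integer) has chromatic number at most ⌈(t+3)/2⌉. -/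
/-- `G` has a tree decomposition of width at most `t`: a tree `T` on index type `ι`
with bags `bag : ι → Finset V` covering every edge, whose supports
`{i | v ∈ bag i}` are nonempty and induce connected subgraphs of `T`,
and with every bag of size at most `t + 1`. -/
def HasTreewidthAtMost {V : Type} [Fintype V] (G : SimpleGraph V) (t : ℕ) : Prop :=
  ∃ (ι : Type) (T : SimpleGraph ι) (bag : ι → Finset V),
    T.IsTree ∧
    (∀ ⦃u v : V⦄, G.Adj u v → ∃ i, u ∈ bag i ∧ v ∈ bag i) ∧
    (∀ v : V, ∃ i, v ∈ bag i) ∧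
    (∀ v : V, (T.induce {i | v ∈ bag i}).Connected) ∧
    (∀ i, (bag i).card ≤ t + 1)

/-!
Root the decomposition tree and let `d v` be the depth of the bag nearest the root containing
`v`. Colour the vertices by increasing `d` with `c = ⌈(t + 3) / 2⌉` colours, keeping every such
bag *good*: properly coloured, with no independent subset seeing all `c` colours. If a new vertex
`u` could not be coloured, then (its neighbourhood being independent, as `G` is triangle-free)
each colour `x` missing on its neighbours would be blocked by an independent set of
non-neighbours of `u` seeing every colour except `x`. A bag has at most `2c - 2` vertices, so
these blocking sets overlap so heavily that they can be merged into one independent set seeing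
all colours, contradicting goodness.
-/

open Finset SimpleGraph

section CommonChoice

variable {κ β : Type*} [DecidableEq κ] [DecidableEq β]

lemma one_le_card_image_erase (F : κ → κ → β) {X : Finset κ} {x y : κ} (hx : x ∈ X)
    (hxy : x ≠ y) : 1 ≤ #((X.erase y).image (F y)) :=
  card_pos.mpr (Nonempty.image ⟨x, mem_erase.mpr ⟨hxy, hx⟩⟩ _)

variable [Fintype κ]

lemma three_le_card_of_sum_card_image_erase_add_three_le {F : κ → κ → β} {X : Finset κ}
    (hX : X.Nonempty) (h : ∑ y, #((X.erase y).image (F y)) + 3 ≤ Fintype.card κ + #X) :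
    3 ≤ #X := by
  obtain ⟨a, ha⟩ := hX
  have hκ : 0 < Fintype.card κ := Fintype.card_pos_iff.mpr ⟨a⟩
  have h₁ : Fintype.card κ - 1 ≤ ∑ y, #((X.erase y).image (F y)) := calc
    Fintype.card κ - 1 = ∑ _y ∈ univ.erase a, 1 := by simp [card_erase_of_mem]
    _ ≤ ∑ y ∈ univ.erase a, #((X.erase y).image (F y)) :=
      sum_le_sum fun y hy => one_le_card_image_erase F ha (ne_of_mem_erase hy).symm
    _ ≤ _ := sum_le_sum_of_subset (subset_univ _)
  obtain ⟨b, hb, hba⟩ : ∃ b ∈ X, b ≠ a := exists_mem_ne (by omega) a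
  have h₂ : Fintype.card κ ≤ ∑ y, #((X.erase y).image (F y)) := calc
    Fintype.card κ = ∑ _y : κ, 1 := by simp
    _ ≤ _ := sum_le_sum fun y _ =>
      if hay : a = y then one_le_card_image_erase F hb (hay ▸ hba)
      else one_le_card_image_erase F ha hay
  omega

/-- Read `F y` as a colouring of `X \ {y}`. When few colours are used in total, one can pick a
colour class of each `F y` (the class of `ξ y`) so that any two picked classes meet. -/
theorem exists_pairwise_common_of_sum_card_image_erase (F : κ → κ → β) (X : Finset κ)
    (hX : X.Nonempty) (h : ∑ y, #((X.erase y).image (F y)) + 3 ≤ Fintype.card κ + #X) :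
    ∃ ξ : κ → κ, (∀ y, ξ y ∈ X.erase y) ∧ ∀ y y', y ≠ y' →
      ∃ x ∈ X.erase y, x ∈ X.erase y' ∧ F y x = F y (ξ y) ∧ F y' x = F y' (ξ y') := by
  induction X using Finset.strongInduction with
  | H X ih =>
  have h3 := three_le_card_of_sum_card_image_erase_add_three_le hX h
  by_cases hA : ∃ y, ∃ xh ∈ X.erase y, ∀ x ∈ (X.erase y).erase xh, F y x ≠ F y xh
  · -- a value of some `F y₀` taken only once can be dropped from `X`
    obtain ⟨y₀, xh, hxh, huniq⟩ := hA
    have hxhX := mem_of_mem_erase hxh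
    have hsub : ∀ y, (X.erase xh).erase y ⊆ X.erase y :=
      fun y => erase_subset_erase y (erase_subset xh X)
    have hlt :
        ∑ y, #(((X.erase xh).erase y).image (F y)) < ∑ y, #((X.erase y).image (F y)) := by
      refine sum_lt_sum (fun y _ => card_le_card (image_subset_image (hsub y)))
        ⟨y₀, mem_univ _, card_lt_card ?_⟩
      refine (ssubset_iff_of_subset (image_subset_image (hsub y₀))).mpr
        ⟨F y₀ xh, mem_image_of_mem _ hxh, fun hmem => ?_⟩
      obtain ⟨x, hx, hFx⟩ := mem_image.mp hmem
      exact huniq x (by rwa [erase_right_comm]) hFx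
    have hcard : #(X.erase xh) + 1 = #X := card_erase_add_one hxhX
    obtain ⟨ξ, hξ, hcommon⟩ := ih (X.erase xh) (erase_ssubset hxhX)
      (card_pos.mp (by omega)) (by omega)
    refine ⟨ξ, fun y => hsub y (hξ y), fun y y' hne => ?_⟩
    obtain ⟨x, hx, hx', hFx⟩ := hcommon y y' hne
    exact ⟨x, hsub y hx, hsub y' hx', hFx⟩
  · push Not at hA
    -- now every value of every `F y` is taken twice, so by counting some `F s` is constant
    obtain ⟨s, hs, hs1⟩ : ∃ s ∈ X, #((X.erase s).image (F s)) ≤ 1 := by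
      by_contra! hbig
      obtain ⟨a, ha⟩ := hX
      have : Fintype.card κ + #X ≤ ∑ y, #((X.erase y).image (F y)) := calc
        Fintype.card κ + #X = ∑ y, (1 + if y ∈ X then 1 else 0) := by
          simp [sum_add_distrib]
        _ ≤ _ := sum_le_sum fun y _ => by
          split_ifs with hy
          · exact hbig y hy
          · exact one_le_card_image_erase F ha (ne_of_mem_of_not_mem ha hy)
      omega
    obtain ⟨x₀, hx₀⟩ : (X.erase s).Nonempty :=
      card_pos.mp (by rw [card_erase_of_mem hs]; omega)
    have hconst : ∀ x ∈ X.erase s, F s x = F s x₀ := fun x hx =>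
      card_le_one.mp hs1 _ (mem_image_of_mem _ hx) _ (mem_image_of_mem _ hx₀)
    let ξ : κ → κ := fun y => if y = s then x₀ else s
    have hξ₀ : ξ s = x₀ := if_pos rfl
    have hξs : ∀ y, y ≠ s → ξ y = s := fun y hy => if_neg hy
    have hcase : ∀ y y', y ≠ y' → y ≠ s →
        ∃ x ∈ X.erase y, x ∈ X.erase y' ∧ F y x = F y (ξ y) ∧ F y' x = F y' (ξ y') := by
      intro y y' hne hy
      rw [hξs y hy]
      by_cases hy' : y' = s
      · subst hy'
        obtain ⟨x, hx, hFx⟩ := hA y y' (mem_erase.mpr ⟨hy.symm, hs⟩)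
        have hx' : x ∈ X.erase y' :=
          mem_erase.mpr ⟨ne_of_mem_erase hx, mem_of_mem_erase (mem_of_mem_erase hx)⟩
        exact ⟨x, mem_of_mem_erase hx, hx', hFx, by rw [hξ₀]; exact hconst x hx'⟩
      · exact ⟨s, mem_erase.mpr ⟨Ne.symm hy, hs⟩, mem_erase.mpr ⟨Ne.symm hy', hs⟩, rfl,
          by rw [hξs y' hy']⟩
    refine ⟨ξ, fun y => ?_, fun y y' hne => ?_⟩
    · by_cases hy : y = s
      · rw [hy, hξ₀]
        exact hx₀
      · rw [hξs y hy]
        exact mem_erase.mpr ⟨Ne.symm hy, hs⟩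
    · by_cases hy : y = s
      · obtain ⟨x, hx, hx', hFx, hFx'⟩ := hcase y' y hne.symm (hy ▸ hne.symm)
        exact ⟨x, hx', hx, hFx', hFx⟩
      · exact hcase y y' hne hy

end CommonChoice

section GoodColoring

variable {V κ : Type*} [Fintype κ] [DecidableEq κ] (G : SimpleGraph V)

structure IsGoodColoringOn (φ : V → κ) (A : Finset V) : Prop where
  ne_of_adj : ∀ ⦃a⦄, a ∈ A → ∀ ⦃b⦄, b ∈ A → G.Adj a b → φ a ≠ φ b
  image_ne_univ : ∀ I ⊆ A, G.IsIndepSet (I : Set V) → I.image φ ≠ univ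

variable {G}

lemma isGoodColoringOn_empty (φ : V → κ) [Nonempty κ] : IsGoodColoringOn G φ ∅ where
  ne_of_adj a ha := absurd ha (notMem_empty a)
  image_ne_univ I hI _ := by
    rw [subset_empty.mp hI, image_empty]
    exact (univ_nonempty).ne_empty.symm

lemma IsGoodColoringOn.mono {φ : V → κ} {A B : Finset V} (h : IsGoodColoringOn G φ A)
    (hBA : B ⊆ A) : IsGoodColoringOn G φ B where
  ne_of_adj _ ha _ hb := h.ne_of_adj (hBA ha) (hBA hb)
  image_ne_univ I hI := h.image_ne_univ I (hI.trans hBA)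

lemma IsGoodColoringOn.congr {φ ψ : V → κ} {A : Finset V} (h : IsGoodColoringOn G φ A)
    (hψ : ∀ a ∈ A, ψ a = φ a) : IsGoodColoringOn G ψ A where
  ne_of_adj a ha b hb hab := by rw [hψ a ha, hψ b hb]; exact h.ne_of_adj ha hb hab
  image_ne_univ I hI hind := by
    rw [image_congr fun a ha => hψ a (hI ha)]
    exact h.image_ne_univ I hI hind

lemma IsGoodColoringOn.exists_indep_image_eq_erase [DecidableEq V] {φ : V → κ} {A : Finset V}
    (hφ : IsGoodColoringOn G φ A) {u : V} (hu : u ∉ A) {x : κ}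
    (hx : ∀ a ∈ A, G.Adj u a → φ a ≠ x)
    (hbad : ¬ IsGoodColoringOn G (Function.update φ u x) (insert u A)) :
    ∃ J ⊆ A, (∀ j ∈ J, ¬ G.Adj u j) ∧ G.IsIndepSet (J : Set V) ∧
      J.image φ = univ.erase x := by
  have hupd : ∀ a ∈ A, Function.update φ u x a = φ a :=
    fun a ha => Function.update_of_ne (ne_of_mem_of_not_mem ha hu) _ _
  have hne : ∀ a ∈ A, G.Adj u a → Function.update φ u x u ≠ Function.update φ u x a := by
    intro a ha hua
    rw [Function.update_self, hupd a ha]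
    exact (hx a ha hua).symm
  have hproper : ∀ ⦃a⦄, a ∈ insert u A → ∀ ⦃b⦄, b ∈ insert u A → G.Adj a b →
      Function.update φ u x a ≠ Function.update φ u x b := by
    intro a ha b hb hab
    by_cases hau : a = u <;> by_cases hbu : b = u
    · exact absurd (hau ▸ hbu ▸ hab) (G.loopless.irrefl _)
    · rw [hau] at hab ⊢
      exact hne b (mem_of_mem_insert_of_ne hb hbu) hab
    · rw [hbu] at hab ⊢
      exact (hne a (mem_of_mem_insert_of_ne ha hau) hab.symm).symm
    · have ha := mem_of_mem_insert_of_ne ha hau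
      have hb := mem_of_mem_insert_of_ne hb hbu
      rw [hupd a ha, hupd b hb]
      exact hφ.ne_of_adj ha hb hab
  obtain ⟨I, hIA, hI, hIφ⟩ : ∃ I ⊆ insert u A, G.IsIndepSet (I : Set V) ∧
      I.image (Function.update φ u x) = univ := by
    by_contra! h
    exact hbad ⟨hproper, h⟩
  have huI : u ∈ I := by
    by_contra huI
    have hIA' : I ⊆ A := fun a ha =>
      (mem_insert.mp (hIA ha)).resolve_left (ne_of_mem_of_not_mem ha huI)
    rw [image_congr fun a ha => hupd a (hIA' ha)] at hIφ
    exact hφ.image_ne_univ I hIA' hI hIφ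
  have hJA : I.erase u ⊆ A := fun a ha =>
    (mem_insert.mp (hIA (mem_of_mem_erase ha))).resolve_left (ne_of_mem_erase ha)
  have hJ : G.IsIndepSet (I.erase u : Set V) := hI.mono (by simp)
  have himage : insert x ((I.erase u).image φ) = univ := by
    rw [← hIφ]
    conv_rhs => rw [← insert_erase huI]
    rw [image_insert, Function.update_self, image_congr fun a ha => hupd a (hJA ha)]
  have hxJ : x ∉ (I.erase u).image φ := fun hxJ =>
    hφ.image_ne_univ _ hJA hJ (by rwa [insert_eq_of_mem hxJ] at himage)
  refine ⟨I.erase u, hJA, fun a ha => ?_, hJ, ?_⟩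
  · exact hI huI (mem_of_mem_erase ha) (ne_of_mem_erase ha).symm
  · rw [← himage, erase_insert hxJ]

end GoodColoring

section Extension

variable {V κ : Type*} [Fintype κ] [DecidableEq κ] {G : SimpleGraph V}

lemma exists_indep_image_eq_univ [DecidableEq V] {φ : V → κ} {W : Finset V} {X : Finset κ}
    (hX : X.Nonempty) (hW : #W + 3 ≤ Fintype.card κ + #X) (J : κ → Finset V)
    (hJW : ∀ x ∈ X, J x ⊆ W) (hJ : ∀ x ∈ X, G.IsIndepSet (J x : Set V))
    (hJφ : ∀ x ∈ X, (J x).image φ = univ.erase x) :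
    ∃ R ⊆ W, G.IsIndepSet (R : Set V) ∧ R.image φ = univ := by
  have hcolour : ∀ y, ∀ x ∈ X.erase y, ∃ v ∈ J x, φ v = y := fun y x hx =>
    mem_image.mp <| (hJφ x (mem_of_mem_erase hx)).symm ▸
      mem_erase.mpr ⟨(ne_of_mem_erase hx).symm, mem_univ y⟩
  have : Nonempty V := by
    obtain ⟨x, hx⟩ := hX
    obtain ⟨y, hy⟩ : ∃ y, y ≠ x := by
      by_contra! h
      have := card_le_univ X
      have := Fintype.card_le_one_iff.mpr fun a b => (h a).trans (h b).symm
      omega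
    exact ⟨(hcolour y x (mem_erase.mpr ⟨hy.symm, hx⟩)).choose⟩
  choose! F hFJ hFφ using hcolour
  have hsum : ∑ y, #((X.erase y).image (F y)) ≤ #W := calc
    ∑ y, #((X.erase y).image (F y)) ≤ ∑ y, #(W.filter (φ · = y)) :=
      sum_le_sum fun y _ => card_le_card <| image_subset_iff.mpr fun x hx =>
        mem_filter.mpr ⟨hJW x (mem_of_mem_erase hx) (hFJ y x hx), hFφ y x hx⟩
    _ = #W := (card_eq_sum_card_fiberwise fun v _ => mem_univ (φ v)).symm
  obtain ⟨ξ, hξ, hcommon⟩ := exists_pairwise_common_of_sum_card_image_erase F X hX (by omega)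
  refine ⟨univ.image fun y => F y (ξ y), ?_, ?_, ?_⟩
  · exact image_subset_iff.mpr fun y _ => hJW _ (mem_of_mem_erase (hξ y)) (hFJ y _ (hξ y))
  · rintro _ ha _ hb hab
    obtain ⟨y, -, rfl⟩ := mem_image.mp ha
    obtain ⟨y', -, rfl⟩ := mem_image.mp hb
    obtain ⟨x, hx, hx', hFx, hFx'⟩ := hcommon y y' fun h => hab (h ▸ rfl)
    rw [← hFx, ← hFx'] at hab ⊢
    exact hJ x (mem_of_mem_erase hx) (hFJ y x hx) (hFJ y' x hx') hab
  · exact eq_univ_of_forall fun y => mem_image.mpr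
      ⟨F y (ξ y), mem_image_of_mem _ (mem_univ y), hFφ y _ (hξ y)⟩

/-- The bound on `#A` is where `c = ⌈(t + 3) / 2⌉` comes from: bags have at most `2c - 2`
vertices. -/
theorem IsGoodColoringOn.exists_update [DecidableEq V] (hfree : G.CliqueFree 3) {φ : V → κ}
    {A : Finset V} (hφ : IsGoodColoringOn G φ A) {u : V} (hu : u ∉ A)
    (hA : #A + 3 ≤ 2 * Fintype.card κ) :
    ∃ x, IsGoodColoringOn G (Function.update φ u x) (insert u A) := by
  classical
  by_contra! hbad
  set N := A.filter (G.Adj u)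
  set X := univ \ N.image φ
  have hN : G.IsIndepSet (N : Set V) :=
    (isIndepSet_neighborSet_of_triangleFree G hfree u).mono fun a ha => (mem_filter.mp ha).2
  have hX : X.Nonempty := sdiff_nonempty.mpr fun h =>
    hφ.image_ne_univ N (filter_subset _ _) hN (univ_subset_iff.mp h)
  have hblock : ∀ x ∈ X, ∃ J ⊆ A, (∀ j ∈ J, ¬ G.Adj u j) ∧
      G.IsIndepSet (J : Set V) ∧ J.image φ = univ.erase x := fun x hx =>
    hφ.exists_indep_image_eq_erase hu (fun a ha hua hax => (mem_sdiff.mp hx).2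
      (mem_image.mpr ⟨a, mem_filter.mpr ⟨ha, hua⟩, hax⟩)) (hbad x)
  choose! J hJA hJu hJ hJφ using hblock
  have hcount : #(A.filter (¬ G.Adj u ·)) + 3 ≤ Fintype.card κ + #X := by
    have : #N + #(A.filter (¬ G.Adj u ·)) = #A := card_filter_add_card_filter_not _
    have : #(N.image φ) ≤ #N := card_image_le
    have : #X + #(N.image φ) = Fintype.card κ := card_sdiff_add_card_eq_card (subset_univ _)
    omega
  obtain ⟨R, hRW, hR, hRφ⟩ := exists_indep_image_eq_univ hX hcount J
    (fun x hx j hj => mem_filter.mpr ⟨hJA x hx hj, hJu x hx j hj⟩) hJ hJφ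
  exact hφ.image_ne_univ R (hRW.trans (filter_subset _ _)) hR hRφ

end Extension

section BagOrder

variable {V : Type*} (G : SimpleGraph V)

/-- `P v` stands for the bag of a rooted tree decomposition nearest to the root among those
containing `v`, and `d v` for its depth. -/
structure IsBagOrder (d : V → ℕ) (P : V → Finset V) : Prop where
  mem_self : ∀ v, v ∈ P v
  mem_of_adj : ∀ ⦃u v⦄, G.Adj u v → d u ≤ d v → u ∈ P v
  mem_of_mem : ∀ ⦃u v w⦄, u ∈ P w → v ∈ P w → d u ≤ d v → u ∈ P v

variable {G}

theorem IsBagOrder.nonempty_coloring [Fintype V] [DecidableEq V] {κ : Type*} [Fintype κ]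
    [DecidableEq κ] (hfree : G.CliqueFree 3) {d : V → ℕ} {P : V → Finset V}
    (hP : IsBagOrder G d P) (hcard : ∀ v, #(P v) + 2 ≤ 2 * Fintype.card κ) :
    Nonempty (G.Coloring κ) := by
  rcases isEmpty_or_nonempty V with hV | ⟨⟨v₀⟩⟩
  · exact ⟨Coloring.mk isEmptyElim fun {a} => isEmptyElim a⟩
  have : Nonempty κ := Fintype.card_pos_iff.mp (by have := hcard v₀; omega)
  have hgood : ∀ S : Finset V, ∃ φ : V → κ, ∀ w, IsGoodColoringOn G φ (S ∩ P w) := by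
    intro S
    induction S using Finset.induction_on_max_value d with
    | empty => exact ⟨fun _ => Classical.arbitrary κ, fun w => by
        rw [empty_inter]; exact isGoodColoringOn_empty _⟩
    | insert v S hvS hmax ih =>
      obtain ⟨φ, hφ⟩ := ih
      have hsmall : #(S ∩ P v) + 3 ≤ 2 * Fintype.card κ := by
        have := card_lt_card (ssubset_iff_of_subset (inter_subset_right (s₁ := S)) |>.mpr
          ⟨v, hP.mem_self v, fun h => hvS (mem_inter.mp h).1⟩)
        have := hcard v
        omega
      obtain ⟨x, hx⟩ := (hφ v).exists_update hfree (fun h => hvS (mem_inter.mp h).1) hsmall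
      refine ⟨Function.update φ v x, fun w => ?_⟩
      by_cases hvw : v ∈ P w
      · refine hx.mono fun a ha => ?_
        obtain ⟨ha, haw⟩ := mem_inter.mp ha
        rcases mem_insert.mp ha with rfl | ha
        · exact mem_insert_self a _
        · exact mem_insert_of_mem (mem_inter.mpr ⟨ha, hP.mem_of_mem haw hvw (hmax a ha)⟩)
      · rw [insert_inter_of_notMem hvw]
        exact (hφ w).congr fun a ha =>
          Function.update_of_ne (ne_of_mem_of_not_mem (mem_inter.mp ha).2 hvw) _ _
  obtain ⟨φ, hφ⟩ := hgood univ
  have hne : ∀ ⦃u v⦄, G.Adj u v → d u ≤ d v → φ u ≠ φ v := fun u v huv hle =>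
    (hφ v).ne_of_adj (mem_inter.mpr ⟨mem_univ u, hP.mem_of_adj huv hle⟩)
      (mem_inter.mpr ⟨mem_univ v, hP.mem_self v⟩) huv
  exact ⟨Coloring.mk φ fun {u v} huv => (le_total (d u) (d v)).elim (hne huv)
    fun hle => (hne huv.symm hle).symm⟩

end BagOrder

namespace SimpleGraph.IsTree

variable {ι : Type*} {T : SimpleGraph ι} (hT : T.IsTree)

noncomputable def path (a b : ι) : T.Walk a b := (hT.existsUnique_path a b).exists.choose

lemma isPath_path (a b : ι) : (hT.path a b).IsPath := (hT.existsUnique_path a b).exists.choose_spec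

lemma eq_path {a b : ι} {p : T.Walk a b} (hp : p.IsPath) : p = hT.path a b :=
  (hT.existsUnique_path a b).unique hp (hT.isPath_path a b)

lemma length_path (a b : ι) : (hT.path a b).length = T.dist a b := by
  obtain ⟨p, hp⟩ := hT.connected.exists_walk_length_eq_dist a b
  rw [← hT.eq_path (p.isPath_of_length_eq_dist hp), hp]

lemma mem_of_mem_support_path {S : Set ι} (hS : (T.induce S).Connected) {a b x : ι} (ha : a ∈ S)
    (hb : b ∈ S) (hx : x ∈ (hT.path a b).support) : x ∈ S := by
  classical
  obtain ⟨w⟩ := hS.preconnected ⟨a, ha⟩ ⟨b, hb⟩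
  let w' : T.Walk a b := w.map (Embedding.induce S).toHom
  rw [← hT.eq_path w'.bypass_isPath] at hx
  obtain ⟨y, -, rfl⟩ :=
    List.mem_map.mp (w.support_map _ ▸ w'.support_bypass_subset_support hx)
  exact y.2

lemma path_eq_concat {r z z' : ι} (hadj : T.Adj z z') (hd : T.dist r z' = T.dist r z + 1) :
    hT.path r z' = (hT.path r z).concat hadj :=
  (hT.eq_path (((hT.path r z).concat hadj).isPath_of_length_eq_dist
    (by rw [Walk.length_concat, hT.length_path, hd]))).symm

lemma mem_support_path_of_forall_dist_le {S : Set ι} (hS : (T.induce S).Connected) {r g : ι}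
    (hg : g ∈ S) (hmin : ∀ j ∈ S, T.dist r g ≤ T.dist r j) {j : ι} (hj : j ∈ S) :
    g ∈ (hT.path r j).support := by
  have step : ∀ {z z' : ι}, T.Adj z z' → z' ∈ S → g ∈ (hT.path r z).support →
      g ∈ (hT.path r z').support := by
    intro z z' hadj hz' hgz
    rcases hT.dist_eq_dist_add_one_of_adj r hadj with hd | hd
    · rw [hT.path_eq_concat hadj.symm hd, Walk.support_concat, List.mem_append,
        List.mem_singleton] at hgz
      exact hgz.resolve_right fun h => by subst h; have := hmin z' hz'; omega
    · rw [hT.path_eq_concat hadj hd, Walk.support_concat]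
      exact List.mem_append_left _ hgz
  obtain ⟨w⟩ := hS.preconnected ⟨g, hg⟩ ⟨j, hj⟩
  suffices ∀ {z z' : S} (w : (T.induce S).Walk z z'), g ∈ (hT.path r z).support →
      g ∈ (hT.path r z').support from this w (Walk.end_mem_support _)
  intro z z' w
  induction w with
  | nil => exact id
  | cons hadj _ ih => exact fun hgz => ih (step hadj (Subtype.prop _) hgz)

variable [DecidableEq ι]

lemma path_append_path {a b x : ι} (hx : x ∈ (hT.path a b).support) :
    (hT.path a x).append (hT.path x b) = hT.path a b := by
  conv_rhs => rw [← (hT.path a b).take_spec hx]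
  rw [← hT.eq_path ((hT.isPath_path a b).takeUntil hx),
    ← hT.eq_path ((hT.isPath_path a b).dropUntil hx)]

lemma dist_add_dist_of_mem_support {a b x : ι} (hx : x ∈ (hT.path a b).support) :
    T.dist a x + T.dist x b = T.dist a b := by
  simp only [← hT.length_path]
  rw [← hT.path_append_path hx, Walk.length_append]

lemma mem_support_path_of_dist_le {r b x y : ι} (hx : x ∈ (hT.path r b).support)
    (hy : y ∈ (hT.path r b).support) (hle : T.dist r x ≤ T.dist r y) :
    y ∈ (hT.path x b).support := by
  rw [← hT.path_append_path hx, Walk.mem_support_append_iff] at hy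
  rcases hy with hy | hy
  · have := hT.dist_add_dist_of_mem_support hy
    rw [← hT.connected.dist_eq_zero_iff.mp (by omega : T.dist y x = 0)]
    exact Walk.start_mem_support _
  · exact hy

end SimpleGraph.IsTree

lemma SimpleGraph.IsTree.mem_of_forall_dist_le {ι : Type*} [DecidableEq ι] {T : SimpleGraph ι}
    (hT : T.IsTree) {S S' : Set ι} (hS : (T.induce S).Connected)
    (hS' : (T.induce S').Connected) {r g g' j : ι} (hg : g ∈ S)
    (hmin : ∀ i ∈ S, T.dist r g ≤ T.dist r i) (hg' : g' ∈ S')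
    (hmin' : ∀ i ∈ S', T.dist r g' ≤ T.dist r i) (hj : j ∈ S) (hj' : j ∈ S')
    (hle : T.dist r g ≤ T.dist r g') : g' ∈ S :=
  hT.mem_of_mem_support_path hS hg hj <| hT.mem_support_path_of_dist_le
    (hT.mem_support_path_of_forall_dist_le hS hg hmin hj)
    (hT.mem_support_path_of_forall_dist_le hS' hg' hmin' hj') hle

theorem HasTreewidthAtMost.exists_isBagOrder {V : Type} [Fintype V] {G : SimpleGraph V} {t : ℕ}
    (h : HasTreewidthAtMost G t) :
    ∃ (d : V → ℕ) (P : V → Finset V), IsBagOrder G d P ∧ ∀ v, #(P v) ≤ t + 1 := by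
  classical
  obtain ⟨ι, T, bag, hT, hedge, hvert, hconn, hbag⟩ := h
  obtain ⟨r⟩ := hT.connected.nonempty
  let g v := Function.argminOn (T.dist r) {i | v ∈ bag i} (hvert v)
  have hg v : v ∈ bag (g v) := Function.argminOn_mem (T.dist r) {i | v ∈ bag i} (hvert v)
  have hmin v : ∀ i ∈ {i | v ∈ bag i}, T.dist r (g v) ≤ T.dist r i :=
    fun _ hi => Function.argminOn_le _ _ hi
  have hshared : ∀ ⦃u v j⦄, u ∈ bag j → v ∈ bag j →
      T.dist r (g u) ≤ T.dist r (g v) → u ∈ bag (g v) := fun u v _ hu hv hle =>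
    hT.mem_of_forall_dist_le (hconn u) (hconn v) (hg u) (hmin u) (hg v) (hmin v) hu hv hle
  refine ⟨fun v => T.dist r (g v), fun v => bag (g v), ⟨hg, fun u v huv hle => ?_,
    fun u v w hu hv hle => hshared hu hv hle⟩, fun v => hbag _⟩
  obtain ⟨j, hu, hv⟩ := hedge huv
  exact hshared hu hv hle

theorem trianglefree_treewidth_chromatic_general {V : Type} [Fintype V] (G : SimpleGraph V)
    (t : ℕ) (htw : HasTreewidthAtMost G t) (hfree : G.CliqueFree 3) :
    G.chromaticNumber ≤ ((t + 4) / 2 : ℕ) := by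
  classical
  obtain ⟨d, P, hP, hcard⟩ := htw.exists_isBagOrder
  refine Colorable.chromaticNumber_le (hP.nonempty_coloring hfree fun v => ?_)
  have := hcard v
  simp only [Fintype.card_fin]
  omega

/-- every triangle-free graph of tree-width at most `t` (`t ≥ 1`) has
chromatic number at most `⌈(t+3)/2⌉` (note `⌈(t+3)/2⌉ = (t+4)/2` in ℕ). -/
theorem trianglefree_treewidth_chromatic {V : Type} [Fintype V] (G : SimpleGraph V)
    (t : ℕ) (ht : 1 ≤ t) (htw : HasTreewidthAtMost G t) (hfree : G.CliqueFree 3) :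
    G.chromaticNumber ≤ ((t + 4) / 2 : ℕ) :=
  trianglefree_treewidth_chromatic_general G t htw hfree
end

section
/- There exists an assignment of lists of size t to the vertices of the complete bipartite graph K_{t,t^t} from which the graph admits no proper coloring; hence the list chromatic number of K_{t,t^t} exceeds t, even though its tree-width is t. -/
/-- there is an assignment of lists of size `t` to the vertices of the
complete bipartite graph `K_{t, t^t}` from which no proper coloring can be chosen;
hence its list chromatic number exceeds `t`. -/
theorem completeBipartite_not_list_colorable (t : ℕ) (ht : 1 ≤ t) :
    ∃ L : (Fin t ⊕ Fin (t ^ t)) → Finset ℕ,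
      (∀ v, (L v).card = t) ∧
      ¬ ∃ φ : (Fin t ⊕ Fin (t ^ t)) → ℕ,
          (∀ ⦃u v⦄, (completeBipartiteGraph (Fin t) (Fin (t ^ t))).Adj u v →
            φ u ≠ φ v) ∧
          (∀ v, φ v ∈ L v) := by
  classical
  set F : Fin (t ^ t) → (Fin t → Fin t) := fun b => finFunctionFinEquiv.symm b with hF
  refine ⟨fun v => Sum.elim
      (fun i => Finset.image (fun j : Fin t => i.val * t + j.val) Finset.univ)
      (fun b => Finset.image (fun i : Fin t => i.val * t + (F b i).val) Finset.univ) v,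
    ?_, ?_⟩
  · rintro (i | b)
    · simp only [Sum.elim_inl]
      rw [Finset.card_image_of_injective _ (fun a c h => ?_), Finset.card_univ,
        Fintype.card_fin]
      exact Fin.ext (Nat.add_left_cancel h)
    · simp only [Sum.elim_inr]
      rw [Finset.card_image_of_injective _ (fun a c h => ?_), Finset.card_univ,
        Fintype.card_fin]
      have ha := (F b a).isLt
      have hc := (F b c).isLt
      have h' : a.val * t + (F b a).val = c.val * t + (F b c).val := h
      have hav := a.isLt
      have hcv := c.isLt
      refine Fin.ext ?_
      nlinarith [Nat.le_of_lt_succ (Nat.lt_succ_of_lt hav)]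
  · rintro ⟨φ, hadj, hmem⟩
    have hA : ∀ i : Fin t, ∃ j : Fin t, φ (Sum.inl i) = i.val * t + j.val := by
      intro i
      have := hmem (Sum.inl i)
      simp only [Sum.elim_inl, Finset.mem_image, Finset.mem_univ, true_and] at this
      obtain ⟨j, hj⟩ := this
      exact ⟨j, hj.symm⟩
    choose g hg using hA
    set b : Fin (t ^ t) := finFunctionFinEquiv g with hb
    have hFb : F b = g := by simp [hF, hb]
    have := hmem (Sum.inr b)
    simp only [Sum.elim_inr, Finset.mem_image, Finset.mem_univ, true_and] at this
    obtain ⟨i, hi⟩ := this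
    have hadj' : (completeBipartiteGraph (Fin t) (Fin (t ^ t))).Adj (Sum.inl i) (Sum.inr b) := by
      simp
    exact hadj hadj' (by rw [hg i, ← hi, hFb])
end

section
/- Let G be a graph with a rooted tree decomposition (T,β) where the root r has β(r) = ∅ and every non-root node z with parent z' satisfies |β(z) \ β(z')| ≤ 1. For each root-to-leaf path P of T, let G_P be the subgraph of G induced by the union of the bags along P. If v ∈ V(G_P) ∩ V(G_{P'}) for two root-leaf paths P, P', then v ∈ β(z) for some node z on the common initial segment of P and P'. -/
/-!
Inside `T`, the bags containing `v` span a connected subtree, so some walk from `z` to `z'`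
stays in it. In a tree, any walk between the endpoints of two paths from a common root `r`
must pass through a node shared by both paths (their meet), and that node then carries `v`.
-/

namespace SimpleGraph

variable {V : Type*} {G : SimpleGraph V}

lemma Reachable.exists_walk_support_subset_of_induce {s : Set V} {u v : s}
    (h : (G.induce s).Reachable u v) : ∃ W : G.Walk u v, ∀ w ∈ W.support, w ∈ s := by
  obtain ⟨W⟩ := h
  refine ⟨W.map (Embedding.induce s).toHom, fun w hw => ?_⟩
  obtain ⟨x, -, rfl⟩ := List.mem_map.1 (Walk.support_map _ _ ▸ hw)
  exact x.2

/-- `a.concat h` is the unique path from `r` to `y`, hence an initial segment of `b`. -/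
lemma IsAcyclic.mem_support_of_isPath_concat [DecidableEq V] (hG : G.IsAcyclic) {r z y y' : V}
    {a : G.Walk r z} {h : G.Adj z y} (ha : (a.concat h).IsPath)
    {b : G.Walk r y'} (hb : b.IsPath) (hy : y ∈ b.support) : z ∈ b.support := by
  have hab : (⟨a.concat h, ha⟩ : G.Path r y) = ⟨b.takeUntil y hy, hb.takeUntil hy⟩ :=
    (hG.subsingleton_path r y).elim _ _
  have hz : z ∈ (a.concat h).support := by simp [Walk.support_concat]
  rw [Subtype.mk.inj hab] at hz
  exact Walk.support_takeUntil_subset_support _ _ hz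

lemma IsAcyclic.exists_mem_support_of_isPath [DecidableEq V] (hG : G.IsAcyclic) {r z z' : V}
    (π : G.Walk z z') (a : G.Walk r z) (b : G.Walk r z') (ha : a.IsPath) (hb : b.IsPath) :
    ∃ w ∈ π.support, w ∈ a.support ∧ w ∈ b.support := by
  induction π with
  | nil => exact ⟨_, Walk.start_mem_support _, a.end_mem_support, b.end_mem_support⟩
  | @cons z y z' h π ih =>
    by_cases hzb : z ∈ b.support
    · exact ⟨z, Walk.start_mem_support _, a.end_mem_support, hzb⟩
    by_cases hya : y ∈ a.support
    · obtain ⟨w, hwπ, hwa, hwb⟩ := ih (a.takeUntil y hya) b (ha.takeUntil hya) hb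
      exact ⟨w, by simp [hwπ], Walk.support_takeUntil_subset_support _ _ hwa, hwb⟩
    have ha' : (a.concat h).IsPath := by
      rw [← Walk.isPath_reverse_iff, Walk.reverse_concat, Walk.cons_isPath_iff]
      exact ⟨ha.reverse, by simpa using hya⟩
    obtain ⟨w, hwπ, hwa, hwb⟩ := ih (a.concat h) b ha' hb
    have hwy : w ≠ y := by
      rintro rfl
      exact hzb (hG.mem_support_of_isPath_concat ha' hb hwb)
    refine ⟨w, by simp [hwπ], ?_, hwb⟩
    simpa [Walk.support_concat, hwy] using hwa

end SimpleGraph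

theorem common_initial_segment_general {V : Type}
    {ι : Type} (T : SimpleGraph ι) (bag : ι → Finset V)
    (htree : T.IsTree)
    (hconn : ∀ v : V, (T.induce {i | v ∈ bag i}).Connected)
    (r : ι)
    (l l' : ι) (p : T.Walk r l) (p' : T.Walk r l')
    (hp : p.IsPath) (hp' : p'.IsPath)
    (v : V) (z : ι) (hz : z ∈ p.support) (hvz : v ∈ bag z)
    (z' : ι) (hz' : z' ∈ p'.support) (hvz' : v ∈ bag z') :
    ∃ w : ι, w ∈ p.support ∧ w ∈ p'.support ∧ v ∈ bag w := by
  classical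
  obtain ⟨W, hW⟩ :=
    ((hconn v).preconnected ⟨z, hvz⟩ ⟨z', hvz'⟩).exists_walk_support_subset_of_induce
  obtain ⟨w, hwW, hwp, hwp'⟩ := htree.isAcyclic.exists_mem_support_of_isPath W
    (p.takeUntil z hz) (p'.takeUntil z' hz') (hp.takeUntil hz) (hp'.takeUntil hz')
  exact ⟨w, p.support_takeUntil_subset_support hz hwp,
    p'.support_takeUntil_subset_support hz' hwp', hW w hwW⟩

/-- let `(T, bag)` be a tree decomposition of `G`, rooted at `r` with
`bag r = ∅` and such that each node `z` at distance `dist r z' + 1` from the root along an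
edge `z'z` (i.e. `z'` is the parent of `z`) satisfies `|bag z \ bag z'| ≤ 1`.
If `p, p'` are paths of `T` from `r` (to leaves `l, l'`) and a vertex `v` of `G` lies in a
bag of a node of `p` and in a bag of a node of `p'`, then `v` lies in the bag of a node on
the common initial segment of `p` and `p'` (a node belonging to both paths). -/
theorem common_initial_segment {V : Type} [Fintype V] [DecidableEq V] (G : SimpleGraph V)
    {ι : Type} (T : SimpleGraph ι) (bag : ι → Finset V)
    (htree : T.IsTree)
    (hcover : ∀ ⦃u v : V⦄, G.Adj u v → ∃ i, u ∈ bag i ∧ v ∈ bag i)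
    (hne : ∀ v : V, ∃ i, v ∈ bag i)
    (hconn : ∀ v : V, (T.induce {i | v ∈ bag i}).Connected)
    (r : ι) (hroot : bag r = ∅)
    (hparent : ∀ z z' : ι, T.Adj z' z → T.dist r z = T.dist r z' + 1 →
      (bag z \ bag z').card ≤ 1)
    (l l' : ι) (p : T.Walk r l) (p' : T.Walk r l')
    (hp : p.IsPath) (hp' : p'.IsPath)
    (v : V) (z : ι) (hz : z ∈ p.support) (hvz : v ∈ bag z)
    (z' : ι) (hz' : z' ∈ p'.support) (hvz' : v ∈ bag z') :
    ∃ w : ι, w ∈ p.support ∧ w ∈ p'.support ∧ v ∈ bag w :=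
  common_initial_segment_general T bag htree hconn r l l' p p' hp hp' v z hz hvz z' hz' hvz'
end

section
/- Let c' be a positive integer, F a finite graph, and φ : V(F) → Fin c' an F-valid coloring. If some (F,φ)-forbidden color is used on exactly one vertex v of F, then removing v and all its neighbors from F removes at least 2 vertices, and the restriction φ' of φ to F' = F − N[v], viewed as a (c'−1)-coloring (colors other than φ(v)), is F'-valid. -/
/-!
Adding `v` to an independent set that avoids `N(v)` and attains every color except `φ v`
would give an independent set attaining all colors, which validity forbids. Hence every such
set meets `N(v)`: for the forbidden witness `A` this shows that `v` has a neighbor, and no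
independent set of `F - N[v]` can be one.
-/

namespace IsIndepSet

variable {V : Type*} {F : SimpleGraph V}

lemma insert_of_forall_not_adj {B : Set V} {v : V} (hB : IsIndepSet F B)
    (hv : ∀ u ∈ B, ¬ F.Adj v u) : IsIndepSet F (insert v B) := by
  rintro a (rfl | ha) b (rfl | hb) hab
  · exact F.loopless.irrefl _ hab
  · exact hv b hb hab
  · exact hv a ha hab.symm
  · exact hB ha hb hab

lemma exists_adj_of_image_eq_compl {α : Type*} {φ : V → α}
    (hvalid : ¬ ∃ A : Set V, IsIndepSet F A ∧ φ '' A = Set.univ)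
    {B : Set V} (hB : IsIndepSet F B) {v : V} (hBv : φ '' B = {φ v}ᶜ) :
    ∃ u ∈ B, F.Adj v u := by
  by_contra! hv
  refine hvalid ⟨insert v B, hB.insert_of_forall_not_adj hv, ?_⟩
  rw [Set.image_insert_eq, hBv, Set.insert_eq, Set.union_compl_self]

end IsIndepSet

lemma SimpleGraph.two_le_ncard_insert_neighborSet {V : Type*} [Finite V] (F : SimpleGraph V)
    {v u : V} (hvu : F.Adj v u) : 2 ≤ (insert v (F.neighborSet v)).ncard := by
  rw [Set.ncard_insert_of_notMem F.notMem_neighborSet_self]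
  have : 0 < (F.neighborSet v).ncard := (Set.ncard_pos).2 ⟨u, hvu⟩
  omega

theorem remove_closed_nbhd_valid_general {V : Type*} [Fintype V] (F : SimpleGraph V)
    (c' : ℕ) (φ : V → Fin c')
    (hvalid : ¬ ∃ A : Set V, IsIndepSet F A ∧ φ '' A = Set.univ)
    (v : V) (A : Set V) (hA : IsIndepSet F A) (hforb : φ '' A = {φ v}ᶜ) :
    2 ≤ (insert v (F.neighborSet v)).ncard ∧
      ¬ ∃ B : Set V, B ⊆ {u : V | u ≠ v ∧ ¬ F.Adj v u} ∧ IsIndepSet F B ∧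
        φ '' B = {φ v}ᶜ := by
  obtain ⟨u, -, hvu⟩ := hA.exists_adj_of_image_eq_compl hvalid hforb
  refine ⟨F.two_le_ncard_insert_neighborSet hvu, ?_⟩
  rintro ⟨B, hBsub, hB, hBv⟩
  obtain ⟨w, hw, hvw⟩ := hB.exists_adj_of_image_eq_compl hvalid hBv
  exact (hBsub hw).2 hvw

/-- if `φ : V → Fin c'` is `F`-valid, the color `φ v` is `(F,φ)`-forbidden
(witness `A`), and `v` is the unique vertex colored `φ v`, then removing the closed
neighborhood of `v` removes at least two vertices, and the restriction of `φ` to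
`F' = F - N[v]` is `F'`-valid as a coloring with the `c' - 1` colors other than `φ v`:
no independent set of `F'` attains all colors except `φ v`. -/
theorem remove_closed_nbhd_valid {V : Type*} [Fintype V] (F : SimpleGraph V)
    (c' : ℕ) (hc' : 0 < c') (φ : V → Fin c')
    (hvalid : ¬ ∃ A : Set V, IsIndepSet F A ∧ φ '' A = Set.univ)
    (v : V) (A : Set V) (hA : IsIndepSet F A) (hforb : φ '' A = {φ v}ᶜ)
    (huniq : ∀ u : V, φ u = φ v → u = v) :
    2 ≤ (insert v (F.neighborSet v)).ncard ∧
      ¬ ∃ B : Set V, B ⊆ {u : V | u ≠ v ∧ ¬ F.Adj v u} ∧ IsIndepSet F B ∧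
        φ '' B = {φ v}ᶜ :=
  remove_closed_nbhd_valid_general F c' φ hvalid v A hA hforb
end
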